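/- Let N ≥ 2 and T ≥ 1 be integers, let 0 < ε < 1/N and η > 0, set ν = 1/16, and let R_{η,ν}(p) = (1/η)·Σ_{i=1}^N p_i log p_i − (1/ν)·Σ_{i=1}^N log p_i. Let ĉ_1, …, ĉ_T ∈ ℝ^N, and for t = 1, …, T+1 let p_t be a minimizer of Φ_t(p) = ⟨p, Σ_{s<t} ĉ_s⟩ + R_{η,ν}(p) over the truncated simplex Δ_N^ε. Suppose that for every t, ĉ_{t,i} ≤ 0 for all i and ⟨ĉ_t, p_t⟩ ≥ −1. Then for every p* ∈ Δ_N^ε: Σ_{t=1}^T ⟨ĉ_t, p_t − p*⟩ ≤ 16·N·log(1/ε) + (1/η)·log N + η·Σ_{t=1}^T Σ_{i=1}^N p_{t,i}·ĉ_{t,i}². -/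

import Mathlib

open Finset

/-- The `ε`-truncated probability simplex in `ℝ^N`. -/
def truncSimplex (N : ℕ) (ε : ℝ) : Set (Fin N → ℝ) :=
  {q | (∀ i, ε ≤ q i) ∧ ∑ i, q i = 1}

/-- The regularizer `R_{η,ν}(p) = (1/η)·∑ i, p i log (p i) − (1/ν)·∑ i, log (p i)`. -/
noncomputable def entLogBarrier (N : ℕ) (η ν : ℝ) (q : Fin N → ℝ) : ℝ :=
  (1 / η) * ∑ i, q i * Real.log (q i) - (1 / ν) * ∑ i, Real.log (q i)

open Real InformationTheory

/-!
FTRL telescoping ("be the leader") bounds the regret by the range of the regularizer over the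
truncated simplex plus the stability terms `Φ_{t+1}(p_t) - Φ_{t+1}(p_{t+1})`. The entropy ranges
over `[-log N, 0]` and `-16 ∑ log` over `[0, 16 N log(1/ε)]`. For a stability term, adding the
first-order optimality conditions of `p = p_t` and `q = p_{t+1}` pits the log-barrier part
`16 (q_j - p_j)² / (p_j q_j)` of the monotone gradient, at the coordinate maximising `q_j / p_j`,
against `⟨-ĉ_t, q - p⟩ ≤ (q_j / p_j - 1) ⟨-ĉ_t, p⟩ ≤ q_j / p_j - 1`; hence `q ≤ (16/15) p`.
In that regime the entropy Bregman divergence `p · klFun (q / p)` is at least `p (q/p - 1)² / 4`,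
and AM-GM bounds each coordinate by `η p_i ĉ_{t,i}²`.
-/

lemma convex_truncSimplex (N : ℕ) (ε : ℝ) : Convex ℝ (truncSimplex N ε) := by
  intro x hx y hy a b ha hb hab
  refine ⟨fun i => ?_, ?_⟩
  · simp only [Pi.add_apply, Pi.smul_apply, smul_eq_mul]
    calc ε = a * ε + b * ε := by rw [← add_mul, hab, one_mul]
      _ ≤ a * x i + b * y i := by gcongr <;> [exact hx.1 i; exact hy.1 i]
  · simp only [Pi.add_apply, Pi.smul_apply, smul_eq_mul, sum_add_distrib, ← mul_sum, hx.2, hy.2]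
    linarith

lemma pos_of_mem_truncSimplex {N : ℕ} {ε : ℝ} (hε : 0 < ε) {q : Fin N → ℝ}
    (hq : q ∈ truncSimplex N ε) (i : Fin N) : 0 < q i :=
  hε.trans_le (hq.1 i)

lemma le_one_of_mem_truncSimplex {N : ℕ} {ε : ℝ} (hε : 0 ≤ ε) {q : Fin N → ℝ}
    (hq : q ∈ truncSimplex N ε) (i : Fin N) : q i ≤ 1 :=
  hq.2 ▸ single_le_sum (fun j _ => hε.trans (hq.1 j)) (mem_univ i)

lemma neg_log_card_le_sum_mul_log {ι : Type*} [Fintype ι] {w : ι → ℝ} (hw : ∀ i, 0 < w i)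
    (hsum : ∑ i, w i = 1) : -log (Fintype.card ι) ≤ ∑ i, w i * log (w i) := by
  have h := strictConcaveOn_log_Ioi.concaveOn.le_map_sum (t := univ) (p := fun i => (w i)⁻¹)
    (fun i _ => (hw i).le) hsum (fun i _ => inv_pos.2 (hw i))
  simp only [smul_eq_mul, log_inv, mul_neg, sum_neg_distrib, mul_inv_cancel₀ (hw _).ne',
    sum_const, card_univ, nsmul_eq_mul, mul_one] at h
  linarith

lemma entLogBarrier_le {N : ℕ} {ε η ν : ℝ} (hε : 0 < ε) (hη : 0 ≤ η) (hν : 0 ≤ ν)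
    {q : Fin N → ℝ} (hq : q ∈ truncSimplex N ε) :
    entLogBarrier N η ν q ≤ 1 / ν * (N * log (1 / ε)) := by
  have hent : ∑ i, q i * log (q i) ≤ 0 := sum_nonpos fun i _ =>
    mul_nonpos_of_nonneg_of_nonpos (pos_of_mem_truncSimplex hε hq i).le
      (log_nonpos (pos_of_mem_truncSimplex hε hq i).le (le_one_of_mem_truncSimplex hε.le hq i))
  have hbar : -(N * log (1 / ε)) ≤ ∑ i, log (q i) := by
    have h : ∀ i ∈ univ, -log (1 / ε) ≤ log (q i) := fun i _ => by
      rw [one_div, log_inv, neg_neg]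
      exact log_le_log hε (hq.1 i)
    simpa using sum_le_sum h
  have := mul_nonpos_of_nonneg_of_nonpos (one_div_nonneg.2 hη) hent
  have := mul_le_mul_of_nonneg_left hbar (one_div_nonneg.2 hν)
  unfold entLogBarrier
  linarith

lemma neg_log_card_le_entLogBarrier {N : ℕ} {ε η ν : ℝ} (hε : 0 < ε) (hη : 0 ≤ η)
    (hν : 0 ≤ ν) {q : Fin N → ℝ} (hq : q ∈ truncSimplex N ε) :
    -(1 / η * log N) ≤ entLogBarrier N η ν q := by
  have hent : -log N ≤ ∑ i, q i * log (q i) := by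
    simpa using neg_log_card_le_sum_mul_log (pos_of_mem_truncSimplex hε hq) hq.2
  have hbar : ∑ i, log (q i) ≤ 0 := sum_nonpos fun i _ =>
    log_nonpos (pos_of_mem_truncSimplex hε hq i).le (le_one_of_mem_truncSimplex hε.le hq i)
  have := mul_le_mul_of_nonneg_left hent (one_div_nonneg.2 hη)
  have := mul_nonpos_of_nonneg_of_nonpos (one_div_nonneg.2 hν) hbar
  unfold entLogBarrier
  linarith

theorem sum_mul_sub_nonneg_of_isMinOn {ι : Type*} [Fintype ι] {f : ι → ℝ → ℝ} {f' : ι → ℝ}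
    {s : Set (ι → ℝ)} {p r : ι → ℝ} (hs : Convex ℝ s)
    (hmin : IsMinOn (fun x => ∑ i, f i (x i)) s p) (hf : ∀ i, HasDerivAt (f i) (f' i) (p i))
    (hp : p ∈ s) (hr : r ∈ s) : 0 ≤ ∑ i, f' i * (r i - p i) := by
  have hF : HasFDerivAt (fun x => ∑ i, f i (x i))
      (∑ i, f' i • ContinuousLinearMap.proj (R := ℝ) (φ := fun _ : ι => ℝ) i) p :=
    HasFDerivAt.fun_sum fun i _ => (hf i).comp_hasFDerivAt p (hasFDerivAt_apply i p)
  simpa using hmin.localize.hasFDerivWithinAt_nonneg hF.hasFDerivWithinAt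
    (sub_mem_posTangentConeAt_of_segment_subset (hs.segment_subset hp hr))

lemma sq_sub_one_div_add_one_le_klFun {x : ℝ} (hx : 1 ≤ x) :
    (x - 1) ^ 2 / (x + 1) ≤ klFun x := by
  have h := le_log_one_add_of_nonneg (sub_nonneg.2 hx)
  rw [add_sub_cancel, div_le_iff₀ (by linarith)] at h
  rw [klFun_apply, div_le_iff₀ (by linarith)]
  nlinarith [mul_le_mul_of_nonneg_left h (by linarith : (0:ℝ) ≤ x)]

noncomputable def entLogCoord (η y : ℝ) : ℝ := 1 / η * (y * log y) - 16 * log y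

noncomputable def entLogCoordDeriv (η y : ℝ) : ℝ := 1 / η * (1 + log y) - 16 / y

/-- `Φ_t` of the paper, with `L = ∑_{s<t} ĉ_s`. -/
noncomputable def ftrlObjective (N : ℕ) (η : ℝ) (L q : Fin N → ℝ) : ℝ :=
  (∑ i, q i * L i) + entLogBarrier N η (1 / 16) q

lemma hasDerivAt_entLogCoord {η y : ℝ} (hy : 0 < y) :
    HasDerivAt (entLogCoord η) (entLogCoordDeriv η y) y := by
  refine ((((hasDerivAt_id' y).fun_mul (hasDerivAt_log hy.ne')).const_mul (1 / η)).fun_sub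
    ((hasDerivAt_log hy.ne').const_mul 16)).congr_deriv ?_
  simp only [entLogCoordDeriv]
  field_simp
  ring

lemma entLogCoord_bregman {η p q : ℝ} (hp : 0 < p) (hq : 0 < q) :
    entLogCoord η q - entLogCoord η p - entLogCoordDeriv η p * (q - p)
      = 1 / η * (p * klFun (q / p)) + 16 * (q / p - 1 - log (q / p)) := by
  simp only [entLogCoord, entLogCoordDeriv, klFun_apply, log_div hq.ne' hp.ne']
  field_simp
  ring

lemma ftrlObjective_eq_sum {N : ℕ} (η : ℝ) (L q : Fin N → ℝ) :
    ftrlObjective N η L q = ∑ i, (q i * L i + entLogCoord η (q i)) := by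
  simp only [ftrlObjective, entLogBarrier, entLogCoord, sum_add_distrib, sum_sub_distrib,
    ← mul_sum, one_div_one_div]

lemma ftrlObjective_add {N : ℕ} (η : ℝ) (L c q : Fin N → ℝ) :
    ftrlObjective N η (L + c) q = ftrlObjective N η L q + ∑ i, c i * q i := by
  simp only [ftrlObjective, Pi.add_apply, mul_add, sum_add_distrib, mul_comm (c _)]
  ring

lemma ftrlObjective_first_order {N : ℕ} {ε η : ℝ} (hε : 0 < ε) {L p r : Fin N → ℝ}
    (hmin : IsMinOn (ftrlObjective N η L) (truncSimplex N ε) p)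
    (hp : p ∈ truncSimplex N ε) (hr : r ∈ truncSimplex N ε) :
    0 ≤ ∑ i, (L i + entLogCoordDeriv η (p i)) * (r i - p i) := by
  refine sum_mul_sub_nonneg_of_isMinOn (f := fun i y => y * L i + entLogCoord η y)
    (convex_truncSimplex N ε) ?_ (fun i => ?_) hp hr
  · simpa only [← ftrlObjective_eq_sum] using hmin
  · exact (hasDerivAt_mul_const (L i)).fun_add
      (hasDerivAt_entLogCoord (pos_of_mem_truncSimplex hε hp i))

lemma mul_sq_sub_div_le_entLogCoordDeriv_sub_mul {η p q : ℝ} (hη : 0 ≤ η) (hp : 0 < p)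
    (hq : 0 < q) :
    16 * (q - p) ^ 2 / (p * q) ≤ (entLogCoordDeriv η q - entLogCoordDeriv η p) * (q - p) := by
  have hlog : 0 ≤ (log q - log p) * (q - p) := by
    rcases le_total p q with h | h
    · exact mul_nonneg (sub_nonneg.2 (log_le_log hp h)) (sub_nonneg.2 h)
    · exact mul_nonneg_of_nonpos_of_nonpos (sub_nonpos.2 (log_le_log hq h)) (sub_nonpos.2 h)
  have hsplit : (entLogCoordDeriv η q - entLogCoordDeriv η p) * (q - p)
      = 1 / η * ((log q - log p) * (q - p)) + 16 * (q - p) ^ 2 / (p * q) := by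
    simp only [entLogCoordDeriv]
    field_simp
    ring
  rw [hsplit]
  linarith [mul_nonneg (one_div_nonneg.2 hη) hlog]

lemma sum_entLogCoordDeriv_sub_mul_sub_le {N : ℕ} {ε η : ℝ} (hε : 0 < ε) {L c p q : Fin N → ℝ}
    (hp : p ∈ truncSimplex N ε) (hq : q ∈ truncSimplex N ε)
    (hpmin : IsMinOn (ftrlObjective N η L) (truncSimplex N ε) p)
    (hqmin : IsMinOn (ftrlObjective N η (L + c)) (truncSimplex N ε) q) :
    ∑ i, (entLogCoordDeriv η (q i) - entLogCoordDeriv η (p i)) * (q i - p i)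
      ≤ ∑ i, -c i * (q i - p i) := by
  have hsum := add_nonneg (ftrlObjective_first_order hε hpmin hp hq)
    (ftrlObjective_first_order hε hqmin hq hp)
  rw [← sum_add_distrib] at hsum
  rw [← sub_nonneg, ← sum_sub_distrib]
  refine hsum.trans_eq (sum_congr rfl fun i _ => ?_)
  simp only [Pi.add_apply]
  ring

lemma le_mul_of_sum_entLogCoordDeriv_sub_mul_sub_le {N : ℕ} {η : ℝ} (hη : 0 ≤ η)
    {c p q : Fin N → ℝ} (hp : ∀ i, 0 < p i) (hq : ∀ i, 0 < q i) (hc : ∀ i, c i ≤ 0)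
    (hcp : -1 ≤ ∑ i, c i * p i)
    (h : ∑ i, (entLogCoordDeriv η (q i) - entLogCoordDeriv η (p i)) * (q i - p i)
      ≤ ∑ i, -c i * (q i - p i)) (i : Fin N) :
    q i ≤ 16 / 15 * p i := by
  obtain ⟨j, -, hj⟩ := exists_max_image univ (fun k => q k / p k) ⟨i, mem_univ i⟩
  set ρ := q j / p j
  have hratio : ∀ k, q k ≤ ρ * p k := fun k => (div_le_iff₀ (hp k)).1 (hj k (mem_univ k))
  suffices ρ ≤ 16 / 15 by nlinarith [hratio i, hp i]
  rcases le_or_gt ρ 1 with hρ | hρ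
  · linarith
  have hrhs : ∑ k, -c k * (q k - p k) ≤ ρ - 1 := calc
    ∑ k, -c k * (q k - p k) ≤ ∑ k, (ρ - 1) * -(c k * p k) :=
        sum_le_sum fun k _ => by nlinarith [hratio k, hc k]
    _ = (ρ - 1) * -∑ k, c k * p k := by rw [← mul_sum, sum_neg_distrib]
    _ ≤ ρ - 1 := by nlinarith
  have hterm : ∀ k, 16 * (q k - p k) ^ 2 / (p k * q k)
      ≤ (entLogCoordDeriv η (q k) - entLogCoordDeriv η (p k)) * (q k - p k) :=
    fun k => mul_sq_sub_div_le_entLogCoordDeriv_sub_mul hη (hp k) (hq k)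
  have hlhs : 16 * (ρ - 1) ^ 2 / ρ ≤ ρ - 1 := calc
    16 * (ρ - 1) ^ 2 / ρ = 16 * (q j - p j) ^ 2 / (p j * q j) := by
        have hqj : q j = ρ * p j := (div_mul_cancel₀ _ (hp j).ne').symm
        rw [hqj]
        field_simp [(hp j).ne']
    _ ≤ ∑ k, (entLogCoordDeriv η (q k) - entLogCoordDeriv η (p k)) * (q k - p k) :=
        (hterm j).trans (single_le_sum (fun k _ =>
          (div_nonneg (by positivity) (mul_pos (hp k) (hq k)).le).trans (hterm k)) (mem_univ j))
    _ ≤ ρ - 1 := h.trans hrhs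
  rw [div_le_iff₀ (by linarith)] at hlhs
  nlinarith

lemma mul_sub_sub_klFun_le {η c p q : ℝ} (hη : 0 < η) (hc : c ≤ 0) (hp : 0 < p) (hq : 0 < q)
    (hqp : q ≤ 3 * p) : c * (p - q) - 1 / η * (p * klFun (q / p)) ≤ η * (p * c ^ 2) := by
  have hkl : 0 ≤ klFun (q / p) := klFun_nonneg (div_pos hq hp).le
  rcases le_total q p with hle | hle
  · have : c * (p - q) ≤ 0 := mul_nonpos_of_nonpos_of_nonneg hc (sub_nonneg.2 hle)
    have : 0 ≤ 1 / η * (p * klFun (q / p)) := by positivity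
    have : 0 ≤ η * (p * c ^ 2) := by positivity
    linarith
  set u := q / p - 1 with hu
  have hqu : q - p = u * p := by rw [hu]; field_simp
  have hu0 : 0 ≤ u := by rw [hu, sub_nonneg, le_div_iff₀ hp]; linarith
  have hu2 : u ≤ 2 := by rw [hu, sub_le_iff_le_add, div_le_iff₀ hp]; linarith
  have hklu : u ^ 2 / 4 ≤ klFun (q / p) := calc
    u ^ 2 / 4 ≤ u ^ 2 / (u + 2) := div_le_div_of_nonneg_left (sq_nonneg u) (by linarith)
        (by linarith)
    _ = (q / p - 1) ^ 2 / (q / p + 1) := by rw [hu]; ring_nf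
    _ ≤ klFun (q / p) := sq_sub_one_div_add_one_le_klFun (by linarith)
  -- AM-GM: `-c u ≤ η c² + u² / (4η)`
  have hamgm : -c * u - 1 / η * (u ^ 2 / 4) ≤ η * c ^ 2 := by
    rw [← sub_nonneg]
    have : η * c ^ 2 - (-c * u - 1 / η * (u ^ 2 / 4)) = (η * c + u / 2) ^ 2 / η := by
      field_simp
      ring
    rw [this]
    positivity
  have h1 := mul_le_mul_of_nonneg_left hamgm hp.le
  have h2 := mul_le_mul_of_nonneg_left hklu (by positivity : 0 ≤ p / η)
  have h3 : c * (p - q) = p * (-c * u) := by rw [← neg_sub, hqu]; ring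
  have h4 : 1 / η * (p * klFun (q / p)) = p / η * klFun (q / p) := by ring
  have h5 : p * (1 / η * (u ^ 2 / 4)) = p / η * (u ^ 2 / 4) := by ring
  nlinarith

theorem ftrlObjective_sub_le {N : ℕ} {ε η : ℝ} (hε : 0 < ε) (hη : 0 < η) {L c p q : Fin N → ℝ}
    (hp : p ∈ truncSimplex N ε) (hq : q ∈ truncSimplex N ε)
    (hpmin : IsMinOn (ftrlObjective N η L) (truncSimplex N ε) p)
    (hqmin : IsMinOn (ftrlObjective N η (L + c)) (truncSimplex N ε) q)
    (hc : ∀ i, c i ≤ 0) (hcp : -1 ≤ ∑ i, c i * p i) :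
    ftrlObjective N η (L + c) p - ftrlObjective N η (L + c) q ≤ η * ∑ i, p i * c i ^ 2 := by
  have hp0 := pos_of_mem_truncSimplex hε hp
  have hq0 := pos_of_mem_truncSimplex hε hq
  have hratio := le_mul_of_sum_entLogCoordDeriv_sub_mul_sub_le hη.le hp0 hq0 hc hcp
    (sum_entLogCoordDeriv_sub_mul_sub_le hε hp hq hpmin hqmin)
  calc ftrlObjective N η (L + c) p - ftrlObjective N η (L + c) q
      = ∑ i, ((L i + c i) * (p i - q i) - (entLogCoord η (q i) - entLogCoord η (p i))) := by
        rw [ftrlObjective_eq_sum, ftrlObjective_eq_sum, ← sum_sub_distrib]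
        exact sum_congr rfl fun i _ => by simp only [Pi.add_apply]; ring
    _ ≤ ∑ i, ((L i + c i) * (p i - q i) - (entLogCoord η (q i) - entLogCoord η (p i)))
        + ∑ i, (L i + entLogCoordDeriv η (p i)) * (q i - p i) :=
        le_add_of_nonneg_right (ftrlObjective_first_order hε hpmin hp hq)
    _ = ∑ i, (c i * (p i - q i) - (1 / η * (p i * klFun (q i / p i))
        + 16 * (q i / p i - 1 - log (q i / p i)))) := by
        rw [← sum_add_distrib]
        refine sum_congr rfl fun i _ => ?_
        rw [← entLogCoord_bregman (hp0 i) (hq0 i)]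
        ring
    _ ≤ ∑ i, η * (p i * c i ^ 2) := sum_le_sum fun i _ => by
        have h1 := mul_sub_sub_klFun_le hη (hc i) (hp0 i) (hq0 i) (by linarith [hratio i, hp0 i])
        have h2 := log_le_sub_one_of_pos (div_pos (hq0 i) (hp0 i))
        linarith
    _ = η * ∑ i, p i * c i ^ 2 := (mul_sum _ _ _).symm

theorem ftrl_regret_le {X : Type*} (Φ ℓ : ℕ → X → ℝ)
    (hΦ : ∀ t x, Φ (t + 1) x = Φ t x + ℓ t x) (p : ℕ → X) (u : X) (T : ℕ)
    (hT : Φ T (p T) ≤ Φ T u) :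
    ∑ t ∈ range T, (ℓ t (p t) - ℓ t u)
      ≤ Φ 0 u - Φ 0 (p 0) + ∑ t ∈ range T, (Φ (t + 1) (p t) - Φ (t + 1) (p (t + 1))) := by
  have hℓ : ∀ t x, ℓ t x = Φ (t + 1) x - Φ t x := fun t x => by rw [hΦ]; ring
  have hsplit : ∑ t ∈ range T, (ℓ t (p t) - ℓ t u)
      = ∑ t ∈ range T, (Φ (t + 1) (p t) - Φ (t + 1) (p (t + 1)))
        + ∑ t ∈ range T, (Φ (t + 1) (p (t + 1)) - Φ t (p t))
        - ∑ t ∈ range T, (Φ (t + 1) u - Φ t u) := by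
    rw [← sum_add_distrib, ← sum_sub_distrib]
    exact sum_congr rfl fun t _ => by rw [hℓ, hℓ]; ring
  rw [hsplit, sum_range_sub (fun t => Φ t (p t)), sum_range_sub (fun t => Φ t u)]
  linarith

theorem ftrl_log_barrier_pathwise_regret_general {N : ℕ} (T : ℕ)
    (ε η : ℝ) (hε0 : 0 < ε) (hη : 0 < η)
    (chat : ℕ → Fin N → ℝ) (p : ℕ → Fin N → ℝ)
    (hp : ∀ t ≤ T, p t ∈ truncSimplex N ε ∧ ∀ q ∈ truncSimplex N ε,
      (∑ i, p t i * ∑ s ∈ Finset.range t, chat s i) + entLogBarrier N η (1 / 16) (p t)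
        ≤ (∑ i, q i * ∑ s ∈ Finset.range t, chat s i) + entLogBarrier N η (1 / 16) q)
    (hchat : ∀ t < T, (∀ i, chat t i ≤ 0) ∧ -1 ≤ ∑ i, chat t i * p t i)
    (pstar : Fin N → ℝ) (hps : pstar ∈ truncSimplex N ε) :
    ∑ t ∈ Finset.range T, ∑ i, chat t i * (p t i - pstar i)
      ≤ 16 * N * Real.log (1 / ε) + (1 / η) * Real.log N
        + η * ∑ t ∈ Finset.range T, ∑ i, p t i * (chat t i) ^ 2 := by
  set L : ℕ → Fin N → ℝ := fun t i => ∑ s ∈ range t, chat s i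
  have hL : ∀ t, L (t + 1) = L t + chat t := fun t => funext fun i => sum_range_succ _ _
  have hmin : ∀ t ≤ T, IsMinOn (ftrlObjective N η (L t)) (truncSimplex N ε) (p t) :=
    fun t ht => isMinOn_iff.2 (hp t ht).2
  have hstab : ∀ t ∈ range T, ftrlObjective N η (L (t + 1)) (p t)
      - ftrlObjective N η (L (t + 1)) (p (t + 1)) ≤ η * ∑ i, p t i * chat t i ^ 2 := by
    intro t ht
    have ht := mem_range.1 ht
    rw [hL]
    exact ftrlObjective_sub_le hε0 hη (hp t ht.le).1 (hp (t + 1) ht).1 (hmin t ht.le)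
      (hL t ▸ hmin (t + 1) ht) (hchat t ht).1 (hchat t ht).2
  have hregret := ftrl_regret_le (fun t => ftrlObjective N η (L t))
    (fun t x => ∑ i, chat t i * x i) (fun t x => by simp only [hL, ftrlObjective_add])
    p pstar T ((hmin T le_rfl) hps)
  have hΦ0 : ∀ x, ftrlObjective N η (L 0) x = entLogBarrier N η (1 / 16) x := by
    simp [ftrlObjective, L]
  have hRstar := entLogBarrier_le hε0 hη.le (by norm_num : (0 : ℝ) ≤ 1 / 16) hps
  have hR0 := neg_log_card_le_entLogBarrier hε0 hη.le (by norm_num : (0 : ℝ) ≤ 1 / 16)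
    (hp 0 (Nat.zero_le T)).1
  rw [one_div_one_div] at hRstar
  calc ∑ t ∈ range T, ∑ i, chat t i * (p t i - pstar i)
      = ∑ t ∈ range T, (∑ i, chat t i * p t i - ∑ i, chat t i * pstar i) := by
        simp only [mul_sub, sum_sub_distrib]
    _ ≤ _ := hregret
    _ ≤ _ := by
        rw [hΦ0, hΦ0, mul_sum]
        linarith [sum_le_sum hstab]

/-- **Deterministic pathwise regret bound for log-barrier FTRL with `ν = 1/16`.**
(0-indexed: `p t` is the paper's `p_{t+1}` and `chat t` the paper's `ĉ_{t+1}`.) If each `chat t`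
is componentwise nonpositive with `⟨chat t, p t⟩ ≥ −1`, then for every `p* ∈ Δ_N^ε`:
`∑_{t<T} ⟨chat t, p t − p*⟩ ≤ 16 N log(1/ε) + (1/η) log N + η ∑_{t<T} ∑ i, p t i · (chat t i)²`. -/
theorem ftrl_log_barrier_pathwise_regret {N : ℕ} (hN : 2 ≤ N) (T : ℕ) (hT : 1 ≤ T)
    (ε η : ℝ) (hε0 : 0 < ε) (hε1 : ε < 1 / N) (hη : 0 < η)
    (chat : ℕ → Fin N → ℝ) (p : ℕ → Fin N → ℝ)
    (hp : ∀ t ≤ T, p t ∈ truncSimplex N ε ∧ ∀ q ∈ truncSimplex N ε,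
      (∑ i, p t i * ∑ s ∈ Finset.range t, chat s i) + entLogBarrier N η (1 / 16) (p t)
        ≤ (∑ i, q i * ∑ s ∈ Finset.range t, chat s i) + entLogBarrier N η (1 / 16) q)
    (hchat : ∀ t < T, (∀ i, chat t i ≤ 0) ∧ -1 ≤ ∑ i, chat t i * p t i)
    (pstar : Fin N → ℝ) (hps : pstar ∈ truncSimplex N ε) :
    ∑ t ∈ Finset.range T, ∑ i, chat t i * (p t i - pstar i)
      ≤ 16 * N * Real.log (1 / ε) + (1 / η) * Real.log N
        + η * ∑ t ∈ Finset.range T, ∑ i, p t i * (chat t i) ^ 2 :=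
  ftrl_log_barrier_pathwise_regret_general T ε η hε0 hη chat p hp hchat pstar hps
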